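/- arXiv:0801.3088 — 5 statements merged into one kernel-verified Lean document; each statement's English description precedes it below -/
import Mathlib

section
/- Suppose F : D ⊂ X → Y is Fréchet differentiable and satisfies the tangential cone condition ‖F(x) − F(x̄) − F'(x)(x − x̄)‖ ≤ η ‖F(x) − F(x̄)‖ for all x, x̄ in a ball B, with η < 1/2. Let x* ∈ B satisfy F(x*) = y, let y^δ satisfy ‖y^δ − y‖ ≤ δ, let x ∈ B, set s := F'(x)*(F(x) − y^δ) and x₊ := x − α s with α > 0 satisfying α‖s‖² ≤ ‖F(x) − y^δ‖². Then ‖x₊ − x*‖² − ‖x − x*‖² ≤ α ‖F(x) − y^δ‖ ( (2η − 1)‖F(x) − y^δ‖ + 2(1+η) δ ). -/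
/-!
Expanding the square, `‖x₊ - x*‖² - ‖x - x*‖² = α²‖s‖² - 2α⟪F x - yδ, F'(x)(x - x*)⟫`. The step-size
condition bounds the first term by `α‖F x - yδ‖²`, and the tangential cone condition at `(x, x*)`,
with `F x - F x* = (F x - yδ) + (yδ - y)`, bounds the inner product from below by
`(1 - η)‖F x - yδ‖² - (1 + η)δ‖F x - yδ‖`.
-/

open scoped InnerProductSpace

section SteepestDescent

variable {X Y : Type*} [NormedAddCommGroup X] [InnerProductSpace ℝ X]
  [NormedAddCommGroup Y] [InnerProductSpace ℝ Y]

lemma sq_sub_mul_le_real_inner_of_norm_add_sub_le {r e v : Y} {η δ : ℝ} (hη : 0 ≤ η)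
    (he : ‖e‖ ≤ δ) (hcone : ‖r + e - v‖ ≤ η * ‖r + e‖) :
    (1 - η) * ‖r‖ ^ 2 - (1 + η) * δ * ‖r‖ ≤ ⟪r, v⟫_ℝ := by
  have hw : ‖r + e - v‖ ≤ η * (‖r‖ + δ) :=
    hcone.trans (mul_le_mul_of_nonneg_left ((norm_add_le r e).trans (by linarith)) hη)
  have hre : -(‖r‖ * δ) ≤ ⟪r, e⟫_ℝ :=
    neg_le_of_abs_le ((abs_real_inner_le_norm r e).trans
      (mul_le_mul_of_nonneg_left he (norm_nonneg r)))
  have hrw : ⟪r, r + e - v⟫_ℝ ≤ ‖r‖ * (η * (‖r‖ + δ)) :=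
    (real_inner_le_norm _ _).trans (mul_le_mul_of_nonneg_left hw (norm_nonneg r))
  have hsplit : ⟪r, v⟫_ℝ = ‖r‖ ^ 2 + ⟪r, e⟫_ℝ - ⟪r, r + e - v⟫_ℝ := by
    rw [inner_sub_right, inner_add_right, real_inner_self_eq_norm_sq]
    ring
  rw [hsplit]
  nlinarith

variable [CompleteSpace X] [CompleteSpace Y]

lemma norm_sub_smul_adjoint_sq_sub_norm_sq_le (A : X →L[ℝ] Y) (u : X) (r : Y) {α : ℝ}
    (hα : 0 ≤ α) (hstep : α * ‖A.adjoint r‖ ^ 2 ≤ ‖r‖ ^ 2) :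
    ‖u - α • A.adjoint r‖ ^ 2 - ‖u‖ ^ 2 ≤ α * (‖r‖ ^ 2 - 2 * ⟪r, A u⟫_ℝ) := by
  have hinner : ⟪u, A.adjoint r⟫_ℝ = ⟪r, A u⟫_ℝ := by
    rw [real_inner_comm, ContinuousLinearMap.adjoint_inner_left]
  rw [norm_sub_sq_real, real_inner_smul_right, norm_smul, Real.norm_eq_abs, abs_of_nonneg hα,
    hinner]
  nlinarith

end SteepestDescent

theorem stmt3_general
    {X Y : Type*} [NormedAddCommGroup X] [InnerProductSpace ℝ X] [CompleteSpace X]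
    [NormedAddCommGroup Y] [InnerProductSpace ℝ Y] [CompleteSpace Y]
    (F : X → Y) (F' : X → X →L[ℝ] Y) (B : Set X)
    (η : ℝ) (hη0 : 0 ≤ η)
    (htcc : ∀ x ∈ B, ∀ x' ∈ B, ‖F x - F x' - F' x (x - x')‖ ≤ η * ‖F x - F x'‖)
    (xstar : X) (hxstarB : xstar ∈ B)
    (y yδ : Y) (δ : ℝ)
    (hsol : F xstar = y) (hnoise : ‖yδ - y‖ ≤ δ)
    (x : X) (hxB : x ∈ B)
    (s : X) (hs : s = ContinuousLinearMap.adjoint (F' x) (F x - yδ))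
    (α : ℝ) (hα : 0 < α) (hstep : α * ‖s‖ ^ 2 ≤ ‖F x - yδ‖ ^ 2)
    (xplus : X) (hxplus : xplus = x - α • s) :
    ‖xplus - xstar‖ ^ 2 - ‖x - xstar‖ ^ 2 ≤
      α * ‖F x - yδ‖ * ((2 * η - 1) * ‖F x - yδ‖ + 2 * (1 + η) * δ) := by
  subst hs hxplus hsol
  have hcone : ‖F x - yδ + (yδ - F xstar) - F' x (x - xstar)‖
      ≤ η * ‖F x - yδ + (yδ - F xstar)‖ := by
    simpa only [sub_add_sub_cancel] using htcc x hxB xstar hxstarB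
  have hdescent := sq_sub_mul_le_real_inner_of_norm_add_sub_le hη0 hnoise hcone
  rw [sub_right_comm]
  calc ‖x - xstar - α • (F' x).adjoint (F x - yδ)‖ ^ 2 - ‖x - xstar‖ ^ 2
      ≤ α * (‖F x - yδ‖ ^ 2 - 2 * ⟪F x - yδ, F' x (x - xstar)⟫_ℝ) :=
        norm_sub_smul_adjoint_sq_sub_norm_sq_le _ _ _ hα.le hstep
    _ ≤ α * (‖F x - yδ‖ ^ 2 - 2 * ((1 - η) * ‖F x - yδ‖ ^ 2 - (1 + η) * δ * ‖F x - yδ‖)) := by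
        gcongr
    _ = α * ‖F x - yδ‖ * ((2 * η - 1) * ‖F x - yδ‖ + 2 * (1 + η) * δ) := by ring

/-- Error decomposition for one steepest-descent step under the
tangential cone condition. -/
theorem stmt3
    {X Y : Type*} [NormedAddCommGroup X] [InnerProductSpace ℝ X] [CompleteSpace X]
    [NormedAddCommGroup Y] [InnerProductSpace ℝ Y] [CompleteSpace Y]
    (F : X → Y) (F' : X → X →L[ℝ] Y) (B : Set X)
    (hdiff : ∀ x ∈ B, HasFDerivAt F (F' x) x)
    (η : ℝ) (hη0 : 0 ≤ η) (hη : η < 1 / 2)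
    (htcc : ∀ x ∈ B, ∀ x' ∈ B, ‖F x - F x' - F' x (x - x')‖ ≤ η * ‖F x - F x'‖)
    (xstar : X) (hxstarB : xstar ∈ B)
    (y yδ : Y) (δ : ℝ) (hδ : 0 ≤ δ)
    (hsol : F xstar = y) (hnoise : ‖yδ - y‖ ≤ δ)
    (x : X) (hxB : x ∈ B)
    (s : X) (hs : s = ContinuousLinearMap.adjoint (F' x) (F x - yδ))
    (α : ℝ) (hα : 0 < α) (hstep : α * ‖s‖ ^ 2 ≤ ‖F x - yδ‖ ^ 2)
    (xplus : X) (hxplus : xplus = x - α • s) :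
    ‖xplus - xstar‖ ^ 2 - ‖x - xstar‖ ^ 2 ≤
      α * ‖F x - yδ‖ * ((2 * η - 1) * ‖F x - yδ‖ + 2 * (1 + η) * δ) :=
  stmt3_general F F' B η hη0 htcc xstar hxstarB y yδ δ hsol hnoise x hxB s hs α hα hstep xplus
    hxplus
end

section
/- Under the tangential cone condition with η < 1/2 and the hypotheses of the previous error-decomposition inequality, if in addition ‖F(x) − y^δ‖ ≥ τ δ with τ ≥ 2(1+η)/(1−2η), then ‖x₊ − x*‖ ≤ ‖x − x*‖, i.e., the steepest descent step is monotone with respect to the distance to the exact solution. -/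
/-!
Write `r = F x - y^δ` for the residual and `s = F'(x)^* r` for the step direction. Expanding the
square, `‖x₊ - x*‖ ≤ ‖x - x*‖` as soon as `α ‖s‖² ≤ 2 ⟪s, x - x*⟫`, and the step size condition
reduces this to `‖r‖² ≤ 2 ⟪r, F'(x) (x - x*)⟫`. Splitting `F'(x) (x - x*)` into the residual, the
data noise and the linearization error, which the tangential cone condition controls, gives
`⟪r, F'(x) (x - x*)⟫ ≥ ‖r‖ ((1 - η) ‖r‖ - (1 + η) δ)`; the discrepancy condition with the given
`τ` is exactly what makes this at least `‖r‖² / 2`.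
-/

open RealInnerProductSpace

section

variable {E : Type*} [NormedAddCommGroup E] [InnerProductSpace ℝ E]

theorem norm_sub_smul_sub_le_of_mul_norm_sq_le_inner {x z s : E} {α : ℝ} (hα : 0 ≤ α)
    (h : α * ‖s‖ ^ 2 ≤ 2 * ⟪s, x - z⟫) : ‖x - α • s - z‖ ≤ ‖x - z‖ := by
  have hexpand : ‖x - α • s - z‖ ^ 2 = ‖x - z‖ ^ 2 - α * (2 * ⟪s, x - z⟫ - α * ‖s‖ ^ 2) := by
    rw [sub_right_comm, norm_sub_sq_real, real_inner_smul_right, norm_smul, mul_pow,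
      Real.norm_eq_abs, sq_abs, real_inner_comm]
    ring
  refine (sq_le_sq₀ (norm_nonneg _) (norm_nonneg _)).mp ?_
  rw [hexpand]
  nlinarith [mul_nonneg hα (sub_nonneg.mpr h)]

theorem mul_le_inner_add_sub_of_norm_le {r n e : E} {η δ : ℝ} (hη : 0 ≤ η) (hn : ‖n‖ ≤ δ)
    (he : ‖e‖ ≤ η * ‖r + n‖) :
    ‖r‖ * ((1 - η) * ‖r‖ - (1 + η) * δ) ≤ ⟪r, r + n - e⟫ := by
  have hnoise : -(‖r‖ * δ) ≤ ⟪r, n⟫ :=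
    le_trans (neg_le_neg (by gcongr)) (neg_le_of_abs_le (abs_real_inner_le_norm r n))
  have herr : ⟪r, e⟫ ≤ ‖r‖ * (η * (‖r‖ + δ)) := by
    calc ⟪r, e⟫ ≤ ‖r‖ * ‖e‖ := real_inner_le_norm r e
      _ ≤ ‖r‖ * (η * (‖r‖ + δ)) := by
        gcongr
        exact he.trans (by gcongr; exact (norm_add_le r n).trans (by linarith))
  rw [inner_sub_right, inner_add_right, real_inner_self_eq_norm_sq]
  nlinarith

end

theorem stmt4_general
    {X Y : Type*} [NormedAddCommGroup X] [InnerProductSpace ℝ X] [CompleteSpace X]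
    [NormedAddCommGroup Y] [InnerProductSpace ℝ Y] [CompleteSpace Y]
    (F : X → Y) (F' : X → X →L[ℝ] Y) (B : Set X)
    (η : ℝ) (hη0 : 0 ≤ η) (hη : η < 1 / 2)
    (htcc : ∀ x ∈ B, ∀ x' ∈ B, ‖F x - F x' - F' x (x - x')‖ ≤ η * ‖F x - F x'‖)
    (xstar : X) (hxstarB : xstar ∈ B)
    (y yδ : Y) (δ : ℝ) (hδ : 0 ≤ δ)
    (hsol : F xstar = y) (hnoise : ‖yδ - y‖ ≤ δ)
    (x : X) (hxB : x ∈ B)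
    (s : X) (hs : s = ContinuousLinearMap.adjoint (F' x) (F x - yδ))
    (α : ℝ) (hα : 0 < α) (hstep : α * ‖s‖ ^ 2 ≤ ‖F x - yδ‖ ^ 2)
    (xplus : X) (hxplus : xplus = x - α • s)
    (τ : ℝ) (hτ : τ ≥ 2 * (1 + η) / (1 - 2 * η))
    (hdisc : ‖F x - yδ‖ ≥ τ * δ) :
    ‖xplus - xstar‖ ≤ ‖x - xstar‖ := by
  set r := F x - yδ
  have hcone : ‖F x - F xstar - F' x (x - xstar)‖ ≤ η * ‖r + (yδ - y)‖ := by
    simpa [r, hsol] using htcc x hxB xstar hxstarB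
  have hlin : F' x (x - xstar) = r + (yδ - y) - (F x - F xstar - F' x (x - xstar)) := by
    simp only [r, hsol]; abel
  have hinner : ‖r‖ * ((1 - η) * ‖r‖ - (1 + η) * δ) ≤ ⟪s, x - xstar⟫ := by
    rw [hs, ContinuousLinearMap.adjoint_inner_left, hlin]
    exact mul_le_inner_add_sub_of_norm_le hη0 hnoise hcone
  have hτη : 2 * (1 + η) ≤ τ * (1 - 2 * η) := (div_le_iff₀ (by linarith)).mp hτ
  have hdisc' : 2 * (1 + η) * δ ≤ (1 - 2 * η) * ‖r‖ := by
    nlinarith [mul_le_mul_of_nonneg_right hτη hδ,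
      mul_le_mul_of_nonneg_left hdisc.le (by linarith : 0 ≤ 1 - 2 * η)]
  have hresidual : ‖r‖ ^ 2 ≤ 2 * (‖r‖ * ((1 - η) * ‖r‖ - (1 + η) * δ)) := by
    nlinarith [mul_le_mul_of_nonneg_left hdisc' (norm_nonneg r)]
  rw [hxplus]
  exact norm_sub_smul_sub_le_of_mul_norm_sq_le_inner hα.le (by linarith)

/-- Monotonicity of the steepest descent step under the discrepancy
condition ‖F(x) − y^δ‖ ≥ τδ with τ ≥ 2(1+η)/(1−2η). -/
theorem stmt4
    {X Y : Type*} [NormedAddCommGroup X] [InnerProductSpace ℝ X] [CompleteSpace X]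
    [NormedAddCommGroup Y] [InnerProductSpace ℝ Y] [CompleteSpace Y]
    (F : X → Y) (F' : X → X →L[ℝ] Y) (B : Set X)
    (hdiff : ∀ x ∈ B, HasFDerivAt F (F' x) x)
    (η : ℝ) (hη0 : 0 ≤ η) (hη : η < 1 / 2)
    (htcc : ∀ x ∈ B, ∀ x' ∈ B, ‖F x - F x' - F' x (x - x')‖ ≤ η * ‖F x - F x'‖)
    (xstar : X) (hxstarB : xstar ∈ B)
    (y yδ : Y) (δ : ℝ) (hδ : 0 ≤ δ)
    (hsol : F xstar = y) (hnoise : ‖yδ - y‖ ≤ δ)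
    (x : X) (hxB : x ∈ B)
    (s : X) (hs : s = ContinuousLinearMap.adjoint (F' x) (F x - yδ))
    (α : ℝ) (hα : 0 < α) (hstep : α * ‖s‖ ^ 2 ≤ ‖F x - yδ‖ ^ 2)
    (xplus : X) (hxplus : xplus = x - α • s)
    (τ : ℝ) (hτ : τ ≥ 2 * (1 + η) / (1 - 2 * η))
    (hdisc : ‖F x - yδ‖ ≥ τ * δ) :
    ‖xplus - xstar‖ ≤ ‖x - xstar‖ :=
  stmt4_general F F' B η hη0 hη htcc xstar hxstarB y yδ δ hδ hsol hnoise x hxB s hs α hα hstep xplus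
    hxplus τ hτ hdisc
end

section
/- Let (e_k) be a sequence in a Hilbert space X such that ‖e_k‖ is nonincreasing, and suppose that for every ε > 0 and all sufficiently large k ≤ l there exists n with k ≤ n ≤ l such that |⟨e_n − e_k, e_n⟩| < ε and |⟨e_n − e_l, e_n⟩| < ε. Then (e_k) is a Cauchy sequence. -/
/-!
Since ‖e k‖² decreases to a limit, ‖e k‖² - ‖e n‖² is small for large k ≤ n. The identity
‖a - b‖² = ‖b‖² - ‖a‖² + 2⟪a - b, a⟫ then makes ‖e n - e k‖ small, and also ‖e n - e l‖ for
n ≤ l, where ‖e l‖² - ‖e n‖² ≤ 0. Every e l with l ≥ N is thus compared with e N through the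
intermediate index n supplied by the hypothesis.
-/

open Set

section InnerProductSpace

variable {X : Type*} [NormedAddCommGroup X] [InnerProductSpace ℝ X]

lemma norm_sub_sq_eq_sub_add_two_inner (a b : X) :
    ‖a - b‖ ^ 2 = ‖b‖ ^ 2 - ‖a‖ ^ 2 + 2 * inner ℝ (a - b) a := by
  rw [norm_sub_sq_real, inner_sub_left, real_inner_self_eq_norm_sq, real_inner_comm]
  ring

lemma norm_sub_sq_lt_three_mul {a b : X} {δ : ℝ} (hnorm : ‖b‖ ^ 2 - ‖a‖ ^ 2 < δ)
    (hinner : |inner ℝ (a - b) a| < δ) : ‖a - b‖ ^ 2 < 3 * δ := by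
  rw [norm_sub_sq_eq_sub_add_two_inner]
  linarith [le_abs_self (inner ℝ (a - b) a)]

end InnerProductSpace

lemma Antitone.exists_forall_sub_lt {u : ℕ → ℝ} (hu : Antitone u) (hb : BddBelow (range u))
    {δ : ℝ} (hδ : 0 < δ) : ∃ K, ∀ k n, K ≤ k → k ≤ n → u k - u n < δ := by
  obtain ⟨K, hK⟩ := ((tendsto_atTop_ciInf hu hb).eventually
    (gt_mem_nhds (lt_add_of_pos_right (⨅ i, u i) hδ))).exists
  exact ⟨K, fun k n hKk _ => by linarith [hu hKk, ciInf_le hb n]⟩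

/-- A sequence with nonincreasing norms, such that the inner-product
cross terms can be made small for large indices, is a Cauchy sequence. -/
theorem stmt8
    {X : Type*} [NormedAddCommGroup X] [InnerProductSpace ℝ X]
    (e : ℕ → X) (hmono : Antitone fun k => ‖e k‖)
    (h : ∀ ε : ℝ, 0 < ε → ∃ K : ℕ, ∀ k l : ℕ, K ≤ k → k ≤ l →
      ∃ n : ℕ, k ≤ n ∧ n ≤ l ∧
        |(inner ℝ (e n - e k) (e n) : ℝ)| < ε ∧
        |(inner ℝ (e n - e l) (e n) : ℝ)| < ε) :
    CauchySeq e := by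
  have hsq : Antitone fun k => ‖e k‖ ^ 2 := fun k l hkl =>
    pow_le_pow_left₀ (norm_nonneg _) (hmono hkl) 2
  have hbdd : BddBelow (range fun k => ‖e k‖ ^ 2) := ⟨0, by rintro _ ⟨k, rfl⟩; positivity⟩
  rw [Metric.cauchySeq_iff']
  intro ε hε
  have hδ : 0 < ε ^ 2 / 12 := by positivity
  have close : ∀ a b : X, ‖b‖ ^ 2 - ‖a‖ ^ 2 < ε ^ 2 / 12 →
      |inner ℝ (a - b) a| < ε ^ 2 / 12 → ‖a - b‖ < ε / 2 := fun a b hnorm hinner =>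
    lt_of_pow_lt_pow_left₀ 2 (by positivity)
      ((norm_sub_sq_lt_three_mul hnorm hinner).trans_eq (by ring))
  obtain ⟨K₁, hK₁⟩ := hsq.exists_forall_sub_lt hbdd hδ
  obtain ⟨K₂, hK₂⟩ := h _ hδ
  set N := max K₁ K₂
  refine ⟨N, fun l hl => ?_⟩
  obtain ⟨n, hNn, hnl, hinner_N, hinner_l⟩ := hK₂ N l (le_max_right _ _) hl
  have hn_N : ‖e n - e N‖ < ε / 2 := close _ _ (hK₁ N n (le_max_left _ _) hNn) hinner_N
  have hn_l : ‖e n - e l‖ < ε / 2 := close _ _ (by linarith [hsq hnl]) hinner_l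
  calc dist (e l) (e N) ≤ dist (e n) (e l) + dist (e n) (e N) := dist_triangle_left _ _ _
    _ = ‖e n - e l‖ + ‖e n - e N‖ := by rw [dist_eq_norm, dist_eq_norm]
    _ < ε := by linarith
end

section
/- Suppose the summability ∑_{k=1}^{∞} ω_k α_k δ_{[k]} ‖F_{[k]}(x_k^δ) − y_{[k]}^δ‖ ≤ C < ∞ holds with C = ‖x_0 − x*‖²/(τ(1−2η) − 2(1+η)), α_k ≥ α_min > 0, all noise levels δ_i ≥ δ_min > 0, and in every cycle of N steps at least one index k has ω_k = 1 (hence ‖F_{[k]}(x_k^δ) − y_{[k]}^δ‖ ≥ τ δ_{[k]}). Then for every l ∈ ℕ, C ≥ l · α_min · δ_min · τ δ_min, which is a contradiction for l large; hence there exists a cycle in which ω_k = 0 for all its N steps. -/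
/-!
Every step with `ω k = 1` contributes at least `αmin * δmin * (τ * δmin) > 0` to the
nonnegative series `∑ ω k α k δ_[k] ‖F_[k](x_k) - y_[k]‖`. If every cycle of `N` steps
contained such a step, the first `L` cycles alone would contribute `L` times this amount,
contradicting the uniform bound `C` on the partial sums once `L` is large.
-/

open Finset

section Blocks

variable {f : ℕ → ℝ} {N : ℕ} {c : ℝ}

theorem natCast_mul_le_sum_range_mul (hf : ∀ k, 0 ≤ f k)
    (hblock : ∀ l, ∃ i < N, c ≤ f (N * l + i)) (L : ℕ) :
    L * c ≤ ∑ k ∈ range (N * L), f k := by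
  induction L with
  | zero => simp
  | succ L ih =>
    obtain ⟨i, hi, hci⟩ := hblock L
    have hcycle : c ≤ ∑ j ∈ range N, f (N * L + j) :=
      hci.trans (single_le_sum (fun j _ => hf (N * L + j)) (mem_range.2 hi))
    rw [mul_add_one, sum_range_add]
    push_cast
    linarith

theorem exists_block_forall_lt_of_sum_range_le {C : ℝ} (hf : ∀ k, 0 ≤ f k)
    (hsum : ∀ L, ∑ k ∈ range L, f k ≤ C) (hc : 0 < c) :
    ∃ l, ∀ i < N, f (N * l + i) < c := by
  by_contra! hblock
  obtain ⟨L, hL⟩ := exists_nat_gt (C / c)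
  have hCL : C < L * c := (div_lt_iff₀ hc).1 hL
  linarith [natCast_mul_le_sum_range_mul hf hblock L, hsum (N * L)]

end Blocks

section LopingTerms

variable {αmin δmin τ ω α d r : ℝ}

theorem loping_term_ge_of_eq_one (h : ω = 1) (hr : τ * d ≤ r)
    (hαmin : 0 < αmin) (hα : αmin ≤ α) (hδmin : 0 < δmin) (hd : δmin ≤ d) (hτ : 0 < τ) :
    αmin * δmin * (τ * δmin) ≤ ω * α * d * r := by
  have hrδ : τ * δmin ≤ r := hr.trans' (by gcongr)
  have hαd : αmin * δmin ≤ α * d := mul_le_mul hα hd hδmin.le (hαmin.le.trans hα)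
  rw [h, one_mul]
  exact mul_le_mul hαd hrδ (by positivity) (hαd.trans' (by positivity))

theorem loping_term_nonneg (hω01 : ω = 0 ∨ ω = 1) (hωdisc : ω = 1 → r ≥ τ * d)
    (hαmin : 0 < αmin) (hα : αmin ≤ α) (hδmin : 0 < δmin) (hd : δmin ≤ d) (hτ : 0 < τ) :
    0 ≤ ω * α * d * r := by
  rcases hω01 with h | h
  · simp [h]
  · exact (loping_term_ge_of_eq_one h (hωdisc h) hαmin hα hδmin hd hτ).trans' (by positivity)

end LopingTerms

theorem stmt11_general
    (N : ℕ) (C αmin δmin τ : ℝ)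
    (ω α d r : ℕ → ℝ)
    (hω01 : ∀ k, ω k = 0 ∨ ω k = 1)
    (hωdisc : ∀ k, ω k = 1 → r k ≥ τ * d k)
    (hαmin : 0 < αmin) (hα : ∀ k, αmin ≤ α k)
    (hδmin : 0 < δmin) (hd : ∀ k, δmin ≤ d k)
    (hτ : 0 < τ)
    (hsum : ∀ L : ℕ, ∑ k ∈ Finset.range L, ω k * α k * d k * r k ≤ C) :
    ∃ l : ℕ, ∀ i < N, ω (N * l + i) = 0 := by
  have hnonneg k := loping_term_nonneg (hω01 k) (hωdisc k) hαmin (hα k) hδmin (hd k) hτ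
  obtain ⟨l, hl⟩ := exists_block_forall_lt_of_sum_range_le (N := N) hnonneg hsum
    (by positivity : 0 < αmin * δmin * (τ * δmin))
  refine ⟨l, fun i hi => (hω01 _).resolve_right fun h => ?_⟩
  exact (hl i hi).not_ge
    (loping_term_ge_of_eq_one h (hωdisc _ h) hαmin (hα _) hδmin (hd _) hτ)

/-- If the weighted residual sums are uniformly bounded, the loping
weights are 0/1, ω_k = 1 forces the residual above τ δ_[k], step sizes are bounded
below and noise levels are bounded below by δ_min > 0, then there exists a cycle in
which ω_k = 0 for all of its N steps (finiteness of the stopping index). -/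
theorem stmt11
    (N : ℕ) (hN : 0 < N) (C αmin δmin τ : ℝ)
    (ω α d r : ℕ → ℝ)
    (hω01 : ∀ k, ω k = 0 ∨ ω k = 1)
    (hωdisc : ∀ k, ω k = 1 → r k ≥ τ * d k)
    (hαmin : 0 < αmin) (hα : ∀ k, αmin ≤ α k)
    (hδmin : 0 < δmin) (hd : ∀ k, δmin ≤ d k)
    (hτ : 0 < τ)
    (hsum : ∀ L : ℕ, ∑ k ∈ Finset.range L, ω k * α k * d k * r k ≤ C) :
    ∃ l : ℕ, ∀ i < N, ω (N * l + i) = 0 :=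
  stmt11_general N C αmin δmin τ ω α d r hω01 hωdisc hαmin hα hδmin hd hτ hsum
end

section
/- If the stopping index k_*^δ (a multiple of N such that x_{k_*^δ}^δ = x_{k_*^δ+1}^δ = … = x_{k_*^δ+N−1}^δ) is attained, then ‖F_i(x_{k_*^δ}^δ) − y_i^δ‖ < τ δ_i for all i = 0,…,N−1. -/
/-! At a stationary step the left side of the monotonicity estimate vanishes. If the residual
reached the threshold `τ δ_i`, the step would be active (`ω = 1`), and the choice of `τ` makes
the right side strictly negative, which is impossible. -/

section DescentBound

variable {η τ δ r : ℝ}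

lemma descent_factor_neg (hη : η < 1 / 2) (hτ : 2 * (1 + η) < τ * (1 - 2 * η)) (hδ : 0 < δ)
    (hr : τ * δ ≤ r) : (2 * η - 1) * r + 2 * (1 + η) * δ < 0 := by
  have : (1 - 2 * η) * (τ * δ) ≤ (1 - 2 * η) * r :=
    mul_le_mul_of_nonneg_left hr (by linarith)
  nlinarith

lemma descent_term_neg {α : ℝ} (hα : 0 < α) (hη0 : 0 ≤ η) (hη : η < 1 / 2)
    (hτ : 2 * (1 + η) < τ * (1 - 2 * η)) (hδ : 0 < δ) (hr : τ * δ ≤ r) :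
    α * r * ((2 * η - 1) * r + 2 * (1 + η) * δ) < 0 := by
  have hτ_pos : 0 < τ := by nlinarith
  have hr_pos : 0 < r := (mul_pos hτ_pos hδ).trans_le hr
  exact mul_neg_of_pos_of_neg (mul_pos hα hr_pos) (descent_factor_neg hη hτ hδ hr)

end DescentBound

theorem stmt12_general
    {X Y : Type*} [NormedAddCommGroup X] [NormedAddCommGroup Y]
    (N : ℕ)
    (F : ℕ → X → Y) (yδ : ℕ → Y) (δ : ℕ → ℝ) (hδ : ∀ i, 0 < δ i)
    (η τ : ℝ) (hη0 : 0 ≤ η) (hη : η < 1 / 2)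
    (hτ : 2 * (1 + η) < τ * (1 - 2 * η))
    (x : ℕ → X) (xstar : X)
    (kstar : ℕ)
    (α ω : ℕ → ℝ) (hα : ∀ k, 0 < α k)
    (hωdef : ∀ i < N,
      (ω (kstar + i) = 1 ↔ ‖F i (x (kstar + i)) - yδ i‖ ≥ τ * δ i) ∧
      (ω (kstar + i) = 0 ∨ ω (kstar + i) = 1))
    (hmon : ∀ i < N,
      ‖x (kstar + i + 1) - xstar‖ ^ 2 - ‖x (kstar + i) - xstar‖ ^ 2 ≤
        ω (kstar + i) * α (kstar + i) * ‖F i (x (kstar + i)) - yδ i‖ *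
          ((2 * η - 1) * ‖F i (x (kstar + i)) - yδ i‖ + 2 * (1 + η) * δ i))
    (hstat : ∀ i < N, x (kstar + i) = x kstar)
    (hstat' : ∀ i < N, x (kstar + i + 1) = x (kstar + i)) :
    ∀ i < N, ‖F i (x kstar) - yδ i‖ < τ * δ i := by
  intro i hi
  by_contra! hge
  have hactive : ω (kstar + i) = 1 := (hωdef i hi).1.mpr (by rwa [hstat i hi])
  have hstep := hmon i hi
  rw [hstat' i hi, hstat i hi, hactive, sub_self, one_mul] at hstep
  exact (descent_term_neg (hα (kstar + i)) hη0 hη hτ (hδ i) hge).not_ge hstep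

/-- If the iteration is stationary over a whole cycle starting at the
stopping index k_* = N·m, then all residuals at x_{k_*} are below the thresholds τ δ_i. -/
theorem stmt12
    {X Y : Type*} [NormedAddCommGroup X] [NormedAddCommGroup Y]
    (N : ℕ) (hN : 0 < N)
    (F : ℕ → X → Y) (yδ : ℕ → Y) (δ : ℕ → ℝ) (hδ : ∀ i, 0 < δ i)
    (η τ : ℝ) (hη0 : 0 ≤ η) (hη : η < 1 / 2)
    (hτ : 2 * (1 + η) < τ * (1 - 2 * η))
    (x : ℕ → X) (xstar : X)
    (kstar m : ℕ) (hkstar : kstar = N * m)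
    (α ω : ℕ → ℝ) (hα : ∀ k, 0 < α k)
    (hωdef : ∀ i < N,
      (ω (kstar + i) = 1 ↔ ‖F i (x (kstar + i)) - yδ i‖ ≥ τ * δ i) ∧
      (ω (kstar + i) = 0 ∨ ω (kstar + i) = 1))
    (hmon : ∀ i < N,
      ‖x (kstar + i + 1) - xstar‖ ^ 2 - ‖x (kstar + i) - xstar‖ ^ 2 ≤
        ω (kstar + i) * α (kstar + i) * ‖F i (x (kstar + i)) - yδ i‖ *
          ((2 * η - 1) * ‖F i (x (kstar + i)) - yδ i‖ + 2 * (1 + η) * δ i))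
    (hstat : ∀ i < N, x (kstar + i) = x kstar)
    (hstat' : ∀ i < N, x (kstar + i + 1) = x (kstar + i)) :
    ∀ i < N, ‖F i (x kstar) - yδ i‖ < τ * δ i :=
  stmt12_general N F yδ δ hδ η τ hη0 hη hτ x xstar kstar α ω hα hωdef hmon hstat hstat'
end
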